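/- arXiv:1403.5538 — 4 statements merged into one kernel-verified Lean document; each statement's English description precedes it below -/
import Mathlib

section
/- Let R be a discrete valuation ring with maximal ideal m, let a and s be positive integers, let M = (R/m^a)^s, and let N be an R-submodule of M. Then there exist natural numbers a_1,…,a_s with 0 ≤ a_i ≤ a for all i such that N is isomorphic as an R-module to ⊕_{i=1}^s R/m^{a_i} and the quotient M/N is isomorphic as an R-module to ⊕_{i=1}^s R/m^{a-a_i}. -/
open IsLocalRing Submodule

section Aux

variable {R : Type*} [CommRing R]

/-- Quotient by a submodule that is characterized coordinatewise by ideals. -/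
noncomputable def quotEquivOfRepr {F : Type*} [AddCommGroup F] [Module R F] {s : ℕ}
    (b : Module.Basis (Fin s) R F) (K : Submodule R F) (J : Fin s → Ideal R)
    (h : ∀ x, x ∈ K ↔ ∀ j, b.repr x j ∈ J j) :
    (F ⧸ K) ≃ₗ[R] ((j : Fin s) → R ⧸ J j) := by
  refine (Submodule.Quotient.equiv K (Submodule.pi Set.univ J) b.equivFun ?_).trans
    (Submodule.quotientPi J)
  ext x
  simp only [Submodule.mem_map, Submodule.mem_pi, Set.mem_univ, forall_true_left]
  constructor
  · rintro ⟨y, hy, rfl⟩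
    intro j
    change b.repr y j ∈ J j
    exact (h y).1 hy j
  · intro hx
    refine ⟨b.equivFun.symm x, (h _).2 fun j => ?_, b.equivFun.apply_symm_apply x⟩
    have : b.repr (b.equivFun.symm x) j = x j := by
      rw [← Module.Basis.equivFun_apply, LinearEquiv.apply_symm_apply]
    rw [this]; exact hx j

theorem repr_sum_smul {F : Type*} [AddCommGroup F] [Module R F] {s : ℕ}
    (b : Module.Basis (Fin s) R F) (d u : Fin s → R) (j : Fin s) :
    b.repr (∑ i, u i • (d i • b i)) j = u j * d j := by
  rw [map_sum]
  simp only [smul_smul, map_smul, Module.Basis.repr_self]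
  rw [Finset.sum_apply']
  simp [Finsupp.single_apply, Finset.sum_ite_eq']

theorem mem_span_diag_iff {F : Type*} [AddCommGroup F] [Module R F] {s : ℕ}
    (b : Module.Basis (Fin s) R F) (d : Fin s → R) (x : F) :
    x ∈ Submodule.span R (Set.range fun i => d i • b i) ↔
      ∀ j, b.repr x j ∈ Ideal.span {d j} := by
  constructor
  · intro hx j
    obtain ⟨u, rfl⟩ := Submodule.mem_span_range_iff_exists_fun R |>.1 hx
    rw [repr_sum_smul]
    exact Ideal.mem_span_singleton.2 ⟨u j, mul_comm _ _⟩
  · intro hx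
    choose u hu using fun j => Ideal.mem_span_singleton.1 (hx j)
    have : x = ∑ i, u i • (d i • b i) := by
      apply b.repr.injective
      ext j
      rw [repr_sum_smul, hu j, mul_comm]
    rw [this]
    exact Submodule.sum_mem _ fun i _ => Submodule.smul_mem _ _ (Submodule.subset_span ⟨i, rfl⟩)

theorem repr_mem_span_iff_exists_smul {F : Type*} [AddCommGroup F] [Module R F] {s : ℕ}
    (b : Module.Basis (Fin s) R F) (r : R) (x : F) :
    (∀ j, b.repr x j ∈ Ideal.span {r}) ↔ ∃ y, x = r • y := by
  constructor
  · intro hx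
    choose u hu using fun j => (Ideal.mem_span_singleton.1 (hx j))
    refine ⟨∑ j, u j • b j, ?_⟩
    rw [Finset.smul_sum]
    conv_lhs => rw [← b.sum_repr x]
    refine Finset.sum_congr rfl fun j _ => ?_
    rw [hu j, smul_smul]
  · rintro ⟨y, rfl⟩
    intro j
    rw [map_smul]
    exact Ideal.mem_span_singleton.2 ⟨b.repr y j, rfl⟩

end Aux

/-- Let `R` be a discrete valuation ring with maximal ideal `m`, let `a, s` be
positive integers, let `M = (R/m^a)^s` and let `N` be an `R`-submodule of `M`.  Then there are
natural numbers `a₁, …, a_s ≤ a` with `N ≅ ⊕ᵢ R/m^(aᵢ)` and `M/N ≅ ⊕ᵢ R/m^(a - aᵢ)` as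
`R`-modules. -/
theorem stmt2
    (R : Type*) [CommRing R] [IsDomain R] [IsDiscreteValuationRing R]
    (a s : ℕ) (ha : 0 < a) (hs : 0 < s)
    (N : Submodule R (Fin s → R ⧸ (maximalIdeal R ^ a))) :
    ∃ f : Fin s → ℕ, (∀ i, f i ≤ a) ∧
      Nonempty (↥N ≃ₗ[R] ((i : Fin s) → R ⧸ (maximalIdeal R ^ f i))) ∧
      Nonempty (((Fin s → R ⧸ (maximalIdeal R ^ a)) ⧸ N) ≃ₗ[R]
        ((i : Fin s) → R ⧸ (maximalIdeal R ^ (a - f i)))) := by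
  classical
  obtain ⟨π, hπ⟩ := IsDiscreteValuationRing.exists_irreducible R
  have hI : maximalIdeal R ^ a = Ideal.span {π ^ a} := by
    rw [hπ.maximalIdeal_eq, Ideal.span_singleton_pow]
  have hπa0 : (π : R) ^ a ≠ 0 := pow_ne_zero _ hπ.ne_zero
  -- the quotient map componentwise
  set q : (Fin s → R) →ₗ[R] (Fin s → R ⧸ (maximalIdeal R ^ a)) :=
    LinearMap.pi (fun j => (Submodule.mkQ (maximalIdeal R ^ a)).comp (LinearMap.proj j)) with hq
  have hqapp : ∀ (x : Fin s → R) (j : Fin s), q x j = Submodule.Quotient.mk (x j) := by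
    intro x j; rfl
  have hqs : Function.Surjective q := by
    intro y
    choose x hx using fun j => Submodule.Quotient.mk_surjective (maximalIdeal R ^ a) (y j)
    exact ⟨x, funext fun j => hx j⟩
  set N' : Submodule R (Fin s → R) := N.comap q with hN'
  have hKmem : ∀ x : Fin s → R, x ∈ LinearMap.ker q ↔ ∀ j, x j ∈ (maximalIdeal R ^ a) := by
    intro x
    simp only [LinearMap.mem_ker, funext_iff]
    constructor
    · intro h j
      have := h j
      rw [hqapp] at this
      exact (Submodule.Quotient.mk_eq_zero (maximalIdeal R ^ a)).1 (by simpa using this)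
    · intro h j
      rw [hqapp]
      simpa using (Submodule.Quotient.mk_eq_zero (maximalIdeal R ^ a)).2 (h j)
  have hKN : LinearMap.ker q ≤ N' := fun x hx => by
    simp only [hN', Submodule.mem_comap, LinearMap.mem_ker.1 hx]
    exact N.zero_mem
  -- Smith normal form
  obtain ⟨n, snf⟩ := N'.smithNormalForm (Pi.basisFun R (Fin s))
  have hsm : ∀ v : Fin s → R, π ^ a • v ∈ LinearMap.ker q := by
    intro v
    rw [hKmem]
    intro j
    rw [hI]
    exact Ideal.mem_span_singleton.2 ⟨v j, rfl⟩
  -- surjectivity of the embedding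
  have hfs : Function.Surjective snf.f := by
    intro j
    by_contra hj
    have hj' : j ∉ Set.range snf.f := by simpa using hj
    have hle := snf.le_ker_coord_of_notMem_range hj'
    have hx : π ^ a • snf.bM j ∈ N' := hKN (hsm _)
    have := hle hx
    rw [LinearMap.mem_ker] at this
    apply hπa0
    simpa [Module.Basis.coord_apply, map_smul, Module.Basis.repr_self] using this
  let σ : Fin n ≃ Fin s := Equiv.ofBijective snf.f ⟨snf.f.injective, hfs⟩
  have hσ : ∀ i, σ i = snf.f i := fun i => rfl
  set d : Fin s → R := fun j => snf.a (σ.symm j) with hd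
  set vB : Fin s → (Fin s → R) := fun j => d j • snf.bM j with hvB
  -- N' is the span of the diagonal vectors
  have hNspan : N' = Submodule.span R (Set.range vB) := by
    have h1 : N' = Submodule.map N'.subtype ⊤ := by
      rw [Submodule.map_subtype_top]
    rw [h1, ← snf.bN.span_eq, Submodule.map_span]
    congr 1
    ext x
    constructor
    · rintro ⟨y, ⟨i, rfl⟩, rfl⟩
      refine ⟨σ i, ?_⟩
      simp only [hvB, hd, Equiv.symm_apply_apply, Submodule.coe_subtype]
      rw [snf.snf i]
      rfl
    · rintro ⟨j, rfl⟩
      refine ⟨snf.bN (σ.symm j), ⟨σ.symm j, rfl⟩, ?_⟩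
      simp only [Submodule.coe_subtype, hvB, hd]
      rw [snf.snf (σ.symm j)]
      congr 1
      exact congrArg snf.bM (σ.apply_symm_apply j)
  have hchar : ∀ x, x ∈ N' ↔ ∀ j, snf.bM.repr x j ∈ Ideal.span {d j} := by
    intro x
    exact (SetLike.ext_iff.1 hNspan x).trans (mem_span_diag_iff snf.bM d x)
  -- divisibility of the diagonal entries
  have hdvd : ∀ j, d j ∣ π ^ a := by
    intro j
    set i := σ.symm j with hi
    have hmem : π ^ a • snf.bM (snf.f i) ∈ N' := hKN (hsm _)
    set m : N' := ⟨π ^ a • snf.bM (snf.f i), hmem⟩ with hm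
    have h1 := snf.repr_apply_embedding_eq_repr_smul (m := m) (i := i)
    have h2 : snf.bM.repr (m : Fin s → R) (snf.f i) = π ^ a := by
      rw [hm]
      simp [map_smul, Module.Basis.repr_self]
    have h3 : snf.bN.repr (snf.a i • m) i = snf.a i * snf.bN.repr m i := by
      rw [map_smul]; rfl
    rw [h2, h3] at h1
    exact ⟨snf.bN.repr m i, h1⟩
  have hd0 : ∀ j, d j ≠ 0 := by
    intro j h0
    apply hπa0
    obtain ⟨t, ht⟩ := hdvd j
    rw [ht, h0, zero_mul]
  choose e u hu using fun j =>
    IsDiscreteValuationRing.eq_unit_mul_pow_irreducible (hd0 j) hπ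
  have he : ∀ j, e j ≤ a := by
    intro j
    have h1 : (π : R) ^ e j ∣ π ^ a := by
      have := hdvd j
      rw [hu j] at this
      exact dvd_of_mul_left_dvd this
    exact (pow_dvd_pow_iff hπ.ne_zero hπ.not_isUnit).1 h1
  -- the span of d j is m ^ e j
  have hspan_d : ∀ j, Ideal.span {d j} = maximalIdeal R ^ e j := by
    intro j
    rw [hπ.maximalIdeal_eq, Ideal.span_singleton_pow]
    refine Ideal.span_singleton_eq_span_singleton.2 ?_
    rw [hu j]
    exact ⟨(u j)⁻¹, by rw [mul_comm ((u j):R) (π ^ e j), mul_assoc, Units.mul_inv, mul_one]⟩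
  refine ⟨fun j => a - e j, fun j => Nat.sub_le _ _, ?_, ?_⟩
  · -- N ≃ ∏ R ⧸ m ^ (a - e j)
    -- restriction of q to N' → N
    set φ : N' →ₗ[R] N := q.restrict (fun x hx => hx) with hφ
    have hφs : Function.Surjective φ := by
      rintro ⟨y, hy⟩
      obtain ⟨x, hx⟩ := hqs y
      exact ⟨⟨x, show q x ∈ N by rw [hx]; exact hy⟩, Subtype.ext hx⟩
    have hφker : LinearMap.ker φ = (LinearMap.ker q).comap N'.subtype := by
      ext x
      simp only [LinearMap.mem_ker, Submodule.mem_comap, Submodule.coe_subtype]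
      constructor
      · intro h
        have : ((φ x : N) : Fin s → R ⧸ (maximalIdeal R ^ a)) = 0 := by rw [h]; rfl
        exact LinearMap.mem_ker.2 this
      · intro h
        apply Subtype.ext
        exact LinearMap.mem_ker.1 h
    -- basis of N'
    set bN' : Module.Basis (Fin s) R N' := snf.bN.reindex σ with hbN'
    have hbN'c : ∀ j, ((bN' j : Fin s → R)) = vB j := by
      intro j
      rw [hbN', Module.Basis.reindex_apply, snf.snf, hvB, hd]
      congr 1
      rw [← hσ, Equiv.apply_symm_apply]
    -- characterization of ker q inside N'
    have hmemI : ∀ x : Fin s → R,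
        (x ∈ LinearMap.ker q) ↔ ∀ j, snf.bM.repr x j ∈ Ideal.span {π ^ a} := by
      intro x
      rw [hKmem]
      have h1 : (∀ j, x j ∈ (maximalIdeal R ^ a)) ↔ ∃ y, x = π ^ a • y := by
        rw [hI]
        rw [← repr_mem_span_iff_exists_smul (Pi.basisFun R (Fin s)) (π ^ a) x]
        simp [Pi.basisFun_repr]
      rw [h1, ← repr_mem_span_iff_exists_smul snf.bM (π ^ a) x]
    have hcharN : ∀ x : N', ((x : Fin s → R) ∈ LinearMap.ker q) ↔
        ∀ j, bN'.repr x j ∈ Ideal.span {π ^ (a - e j)} := by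
      intro x
      have hx : (x : Fin s → R) = ∑ j, bN'.repr x j • vB j := by
        conv_lhs => rw [← bN'.sum_repr x]
        push_cast
        refine Finset.sum_congr rfl fun j _ => ?_
        rw [hbN'c j]
      have hrepr : ∀ j, snf.bM.repr (x : Fin s → R) j = bN'.repr x j * d j := by
        intro j
        conv_lhs => rw [hx]
        exact repr_sum_smul snf.bM d (fun j => bN'.repr x j) j
      rw [hmemI]
      refine forall_congr' fun j => ?_
      rw [hrepr j, Ideal.mem_span_singleton, Ideal.mem_span_singleton, hu j]
      have hsplit : (π : R) ^ a = π ^ (a - e j) * π ^ e j := by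
        rw [← pow_add, Nat.sub_add_cancel (he j)]
      rw [hsplit, show bN'.repr x j * ((u j : R) * π ^ e j)
            = (bN'.repr x j * (u j : R)) * π ^ e j by ring,
        mul_dvd_mul_iff_right (pow_ne_zero (e j) hπ.ne_zero), Units.dvd_mul_right]
    have hspanpow : ∀ m : ℕ, Ideal.span {π ^ m} = maximalIdeal R ^ m := fun m => by
      rw [hπ.maximalIdeal_eq, Ideal.span_singleton_pow]
    let e2a : (N' ⧸ LinearMap.ker φ) ≃ₗ[R] N := φ.quotKerEquivOfSurjective hφs
    let e2b : (N' ⧸ LinearMap.ker φ) ≃ₗ[R]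
        (N' ⧸ (LinearMap.ker q).comap N'.subtype) := Submodule.quotEquivOfEq _ _ hφker
    let e2c : (N' ⧸ (LinearMap.ker q).comap N'.subtype) ≃ₗ[R]
        ((j : Fin s) → R ⧸ Ideal.span {π ^ (a - e j)}) :=
      quotEquivOfRepr bN' ((LinearMap.ker q).comap N'.subtype)
        (fun j => Ideal.span {π ^ (a - e j)}) (fun x => by
          rw [Submodule.mem_comap]
          exact hcharN x)
    exact ⟨((e2a.symm.trans e2b).trans e2c).trans
      (LinearEquiv.piCongrRight fun j => Submodule.quotEquivOfEq _ _ (hspanpow (a - e j)))⟩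
  · -- M ⧸ N ≃ ∏ R ⧸ m ^ (a - (a - e j))
    set g : (Fin s → R) →ₗ[R] ((Fin s → R ⧸ (maximalIdeal R ^ a)) ⧸ N) := N.mkQ.comp q with hg
    have hgs : Function.Surjective g := (Submodule.mkQ_surjective N).comp hqs
    have hgker : LinearMap.ker g = N' := by
      rw [hg, LinearMap.ker_comp, Submodule.ker_mkQ]
    let e1 : ((Fin s → R) ⧸ N') ≃ₗ[R] ((Fin s → R ⧸ (maximalIdeal R ^ a)) ⧸ N) :=
      (Submodule.quotEquivOfEq N' (LinearMap.ker g) hgker.symm).trans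
        (g.quotKerEquivOfSurjective hgs)
    let e1c : ((Fin s → R) ⧸ N') ≃ₗ[R] ((j : Fin s) → R ⧸ Ideal.span {d j}) :=
      quotEquivOfRepr snf.bM N' (fun j => Ideal.span {d j}) hchar
    have hspanpow : ∀ m : ℕ, Ideal.span {π ^ m} = maximalIdeal R ^ m := fun m => by
      rw [hπ.maximalIdeal_eq, Ideal.span_singleton_pow]
    refine ⟨(e1.symm.trans e1c).trans
      (LinearEquiv.piCongrRight fun j => Submodule.quotEquivOfEq _ _ ?_)⟩
    rw [hspan_d j, Nat.sub_sub_self (he j)]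
end

section
/- Let G be a commutative group, let P be a finitely generated submonoid of G that generates G as a group and is saturated in G (that is, for every x ∈ G and every integer n ≥ 1 with n•x ∈ P, one has x ∈ P). Let e ∈ P and let d be a positive integer. Let H be the quotient of the group G × ℤ by the subgroup generated by (e, −d), and let Q be the image in H of the submonoid of G × ℤ generated by P × {0} and the element (0, 1). Then for every h ∈ H such that n•h ∈ Q for some integer n ≥ 1, the element h + π(0, d) lies in Q, where π : G × ℤ → H is the quotient map. (This is the statement that the image of the amalgamated sum Q = P ⊕_ℕ (1/d)ℕ in its saturation Q^sat contains (0,1) + Q^sat.) -/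
/-- Let `G` be a commutative group and `P` a finitely generated submonoid of
`G` generating `G` as a group and saturated in `G`.  Let `e ∈ P`, let `d ≥ 1`, let `H` be the
quotient of `G × ℤ` by the subgroup generated by `(e, -d)` and let `Q` be the image in `H` of
the submonoid of `G × ℤ` generated by `P × {0}` and `(0, 1)`.  Then every `h ∈ H` with
`n • h ∈ Q` for some `n ≥ 1` satisfies `h + π (0, d) ∈ Q`, where `π` is the quotient map. -/
theorem stmt5
    (G : Type*) [AddCommGroup G]
    (P : AddSubmonoid G) (hPfg : P.FG)
    (hPgen : AddSubgroup.closure (P : Set G) = ⊤)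
    (hPsat : ∀ (x : G) (n : ℕ), 1 ≤ n → n • x ∈ P → x ∈ P)
    (e : G) (he : e ∈ P) (d : ℕ) (hd : 0 < d)
    (S : AddSubgroup (G × ℤ))
    (hS : S = AddSubgroup.zmultiples ((e, -(d : ℤ)) : G × ℤ))
    (Q : AddSubmonoid ((G × ℤ) ⧸ S))
    (hQ : Q = AddSubmonoid.map (QuotientAddGroup.mk' S)
      (AddSubmonoid.closure
        ((fun p : G => ((p, (0 : ℤ)) : G × ℤ)) '' (P : Set G) ∪ {((0 : G), (1 : ℤ))})))
    (h : (G × ℤ) ⧸ S)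
    (hh : ∃ n : ℕ, 1 ≤ n ∧ n • h ∈ Q) :
    h + QuotientAddGroup.mk' S ((0 : G), (d : ℤ)) ∈ Q := by
  set C : AddSubmonoid (G × ℤ) := AddSubmonoid.closure
      ((fun p : G => ((p, (0 : ℤ)) : G × ℤ)) '' (P : Set G) ∪ {((0 : G), (1 : ℤ))}) with hCdef
  -- membership characterization, forward direction
  have hA : ∀ z ∈ C, z.1 ∈ P ∧ 0 ≤ z.2 := by
    intro z hz
    induction hz using AddSubmonoid.closure_induction with
    | mem w hw =>
      rcases hw with ⟨p, hp, rfl⟩ | hw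
      · exact ⟨hp, le_refl 0⟩
      · rw [Set.mem_singleton_iff] at hw
        subst hw
        exact ⟨P.zero_mem, by norm_num⟩
    | zero => exact ⟨P.zero_mem, le_refl 0⟩
    | add a b _ _ ha hb => exact ⟨P.add_mem ha.1 hb.1, add_nonneg ha.2 hb.2⟩
  -- backwards direction
  have hB : ∀ p ∈ P, ∀ m : ℤ, 0 ≤ m → ((p, m) : G × ℤ) ∈ C := by
    intro p hp m hm
    have h1 : ((p, (0 : ℤ)) : G × ℤ) ∈ C :=
      AddSubmonoid.subset_closure (Or.inl ⟨p, hp, rfl⟩)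
    have h2 : (((0 : G), m) : G × ℤ) ∈ C := by
      have hrep : (((0 : G), m) : G × ℤ) = m.toNat • (((0 : G), (1 : ℤ)) : G × ℤ) := by
        rw [Prod.smul_def]
        simp [Int.toNat_of_nonneg hm]
      rw [hrep]
      exact AddSubmonoid.nsmul_mem C (AddSubmonoid.subset_closure (Or.inr rfl)) _
    simpa using C.add_mem h1 h2
  subst hS hQ
  obtain ⟨n, hn1, hnQ⟩ := hh
  obtain ⟨⟨x, k⟩, rfl⟩ := QuotientAddGroup.mk'_surjective _ h
  rw [← map_nsmul] at hnQ
  obtain ⟨z, hzC, hz⟩ := hnQ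
  obtain ⟨hzP, hz2⟩ := hA z hzC
  rw [QuotientAddGroup.mk'_eq_mk'] at hz
  obtain ⟨w, hwS, hw⟩ := hz
  obtain ⟨t0, rfl⟩ := AddSubgroup.mem_zmultiples_iff.mp hwS
  obtain ⟨t, ht⟩ : ∃ t : ℤ, z - n • ((x, k) : G × ℤ) = t • ((e, -(d : ℤ)) : G × ℤ) :=
    ⟨-t0, by rw [neg_smul, ← hw]; abel⟩
  clear hw hwS
  have hx : (n : ℤ) • x = z.1 - t • e := by
    have h1 := congrArg Prod.fst ht
    simp only [Prod.fst_sub, Prod.smul_fst] at h1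
    rw [natCast_zsmul, ← h1]
    abel
  have ht2 : z.2 = (n : ℤ) * k - t * d := by
    have := congrArg Prod.snd ht
    simp [smul_eq_mul, nsmul_eq_mul] at this
    linarith
  set u : ℤ := (-t) / n with hu
  set r : ℤ := (-t) % n with hr
  have hn' : (0 : ℤ) < n := by exact_mod_cast hn1
  have hd' : (0 : ℤ) < d := by exact_mod_cast hd
  have hr0 : 0 ≤ r := Int.emod_nonneg _ (by positivity)
  have hrn : r < n := Int.emod_lt_of_pos _ hn'
  have heq : (n : ℤ) * u + r = -t := Int.mul_ediv_add_emod (-t) n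
  -- first coordinate
  have hcalc : (n : ℤ) • (x - u • e) = z.1 + r • e := by
    rw [smul_sub, hx, smul_smul, show (n : ℤ) * u = -t - r by linarith, sub_smul, neg_smul]
    abel
  have hre : r • e ∈ P := by
    lift r to ℕ using hr0 with r'
    simpa [natCast_zsmul] using AddSubmonoid.nsmul_mem P he r'
  have hxP : x - u • e ∈ P := by
    apply hPsat _ n hn1
    have : (n : ℤ) • (x - u • e) ∈ P := hcalc ▸ P.add_mem hzP hre
    rwa [natCast_zsmul] at this
  -- second coordinate
  have hzd : t * d ≤ (n : ℤ) * k := by linarith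
  have h3 : (n : ℤ) * (k + d + u * d) = ((n : ℤ) * k - t * d) + ((n : ℤ) - r) * d := by
    linear_combination (d : ℤ) * heq
  have h4 : (0 : ℤ) < ((n : ℤ) - r) * d := mul_pos (by linarith) hd'
  have h5 : (0 : ℤ) < (n : ℤ) * (k + d + u * d) := by rw [h3]; linarith
  have h6 : (0 : ℤ) ≤ k + d + u * d := by nlinarith
  -- conclude
  refine ⟨(x - u • e, k + d + u * d), hB _ hxP _ h6, ?_⟩
  rw [← map_add, QuotientAddGroup.mk'_eq_mk']
  refine ⟨u • ((e, -(d : ℤ)) : G × ℤ), AddSubgroup.zsmul_mem_zmultiples _ _, ?_⟩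
  rw [Prod.ext_iff]
  refine ⟨by simp, ?_⟩
  simp only [Prod.snd_add, Prod.smul_snd, smul_eq_mul]
  ring
end

section
/- Let a and m be positive integers with a dividing m. Let G be the quotient of ℤ³ by the subgroup generated by (1, a, −m), with quotient map π : ℤ³ → G, and let Q = π({(u, v, w) ∈ ℤ³ : v ≥ 0 and w ≥ 0}). Let φ : G → ℤ be the group homomorphism induced by (u, v, w) ↦ m·v + a·w (well defined since m·a + a·(−m) = 0). Then for every x ∈ G, there exists an integer n ≥ 1 with n•x ∈ Q if and only if φ(x) ≥ 0. (This computes the saturation of the monoid Q = (ℤ ⊕ (1/a)ℕ) ⊕_ℕ (1/m)ℕ inside its groupification: an element (u, v/a, w/m) lies in Q^sat if and only if m·v + a·w ≥ 0.) -/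
/-- Let `a, m ≥ 1` with `a ∣ m`.  Let `G = ℤ³/⟨(1, a, -m)⟩` with quotient
map `π`, let `Q = π({(u,v,w) : v ≥ 0, w ≥ 0})`, and let `φ : G → ℤ` be the homomorphism
induced by `(u,v,w) ↦ m·v + a·w`.  Then for `x ∈ G` there is `n ≥ 1` with `n • x ∈ Q` if and
only if `φ x ≥ 0`.  (This computes the saturation of `(ℤ ⊕ (1/a)ℕ) ⊕_ℕ (1/m)ℕ` inside its
groupification.) -/
theorem stmt6
    (a m : ℕ) (ha : 0 < a) (hm : 0 < m) (hdvd : a ∣ m)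
    (S : AddSubgroup (ℤ × ℤ × ℤ))
    (hS : S = AddSubgroup.zmultiples (((1 : ℤ), (a : ℤ), -(m : ℤ)) : ℤ × ℤ × ℤ))
    (Q : Set ((ℤ × ℤ × ℤ) ⧸ S))
    (hQ : Q = (QuotientAddGroup.mk' S) ''
      {x : ℤ × ℤ × ℤ | 0 ≤ x.2.1 ∧ 0 ≤ x.2.2})
    (φ : ((ℤ × ℤ × ℤ) ⧸ S) →+ ℤ)
    (hφ : ∀ u v w : ℤ, φ (QuotientAddGroup.mk' S (u, v, w)) = m * v + a * w) :
    ∀ x : (ℤ × ℤ × ℤ) ⧸ S,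
      (∃ n : ℕ, 1 ≤ n ∧ n • x ∈ Q) ↔ 0 ≤ φ x := by
  subst hQ
  intro x
  constructor
  · rintro ⟨n, hn, ⟨⟨y1, y2, y3⟩, ⟨hy1, hy2⟩, hyx⟩⟩
    have h1 : φ (n • x) = m * y2 + a * y3 := by rw [← hyx, hφ]
    have h2 : φ (n • x) = (n : ℤ) * φ x := by
      rw [map_nsmul, nsmul_eq_mul]
    have h3 : (0:ℤ) ≤ (n:ℤ) * φ x := by
      rw [← h2, h1]
      have : (0:ℤ) ≤ (m:ℤ) := by positivity
      have : (0:ℤ) ≤ (a:ℤ) := by positivity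
      nlinarith
    have hn' : (0:ℤ) < n := by exact_mod_cast hn
    nlinarith
  · induction x using QuotientAddGroup.induction_on with
    | H p =>
      obtain ⟨u, v, w⟩ := p
      intro hx
      have hx' : (0:ℤ) ≤ m * v + a * w := by rw [← hφ u v w]; exact hx
      obtain ⟨b, hb⟩ := hdvd
      have hb' : (m:ℤ) = a * b := by exact_mod_cast hb
      set k : ℤ := -(b:ℤ) * v with hk
      refine ⟨m, hm, (m*u + k, m*v + k*a, m*w - k*m), ⟨?_, ?_⟩, ?_⟩
      · show (0:ℤ) ≤ m*v + k*a
        have : (m:ℤ)*v + k*a = 0 := by rw [hk, hb']; ring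
        linarith
      · show (0:ℤ) ≤ m*w - k*m
        have ha' : (0:ℤ) < a := by exact_mod_cast ha
        have h4 : (0:ℤ) ≤ (a:ℤ) * (w + b * v) := by
          have he : (a:ℤ) * (w + b * v) = m * v + a * w := by rw [hb']; ring
          linarith
        have h5 : (0:ℤ) ≤ w + b * v := nonneg_of_mul_nonneg_right h4 ha'
        have hm' : (0:ℤ) ≤ m := by positivity
        have : (m:ℤ)*w - k*m = m * (w + b*v) := by rw [hk]; ring
        rw [this]
        exact mul_nonneg hm' h5
      · have : ((m*u + k, m*v + k*a, m*w - k*m) : ℤ × ℤ × ℤ)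
            = (m : ℕ) • ((u, v, w) : ℤ × ℤ × ℤ) + k • ((1 : ℤ), (a : ℤ), -(m : ℤ)) := by
          simp only [Prod.ext_iff, Prod.smul_def, nsmul_eq_mul, zsmul_eq_mul,
            Prod.fst_add, Prod.snd_add, smul_eq_mul]
          refine ⟨by ring, trivial, by ring⟩
        show (QuotientAddGroup.mk' S) _ = _
        rw [this, map_add, map_nsmul]
        have hz : (QuotientAddGroup.mk' S) (k • ((1 : ℤ), (a : ℤ), -(m : ℤ))) = 0 := by
          show ((k • ((1 : ℤ), (a : ℤ), -(m : ℤ)) : ℤ × ℤ × ℤ) : (ℤ × ℤ × ℤ) ⧸ S) = 0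
          rw [QuotientAddGroup.eq_zero_iff, hS]
          exact AddSubgroup.zsmul_mem _ (AddSubgroup.mem_zmultiples _) k
        rw [hz, add_zero]
        rfl
end

section
/- Let a, b and m be positive integers with a dividing m and b dividing m. Let G be the quotient of ℤ⁴ by the subgroup generated by (1, a, b, −m), with quotient map π : ℤ⁴ → G, and let Q = π({(t, u, v, w) ∈ ℤ⁴ : u ≥ 0, v ≥ 0 and w ≥ 0}). Let φ₁, φ₂ : G → ℤ be the group homomorphisms induced by (t, u, v, w) ↦ m·u + a·w and (t, u, v, w) ↦ m·v + b·w respectively (both well defined on G). Then for every x ∈ G, there exists an integer n ≥ 1 with n•x ∈ Q if and only if φ₁(x) ≥ 0 and φ₂(x) ≥ 0. (This computes the saturation of the monoid Q = (ℤ ⊕ (1/a)ℕ ⊕ (1/b)ℕ) ⊕_ℕ (1/m)ℕ inside its groupification: an element (t, u/a, v/b, w/m) lies in Q^sat if and only if m·u + a·w ≥ 0 and m·v + b·w ≥ 0.) -/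
/-- Let `a, b, m ≥ 1` with `a ∣ m` and `b ∣ m`.  Let
`G = ℤ⁴/⟨(1, a, b, -m)⟩` with quotient map `π`, let
`Q = π({(t,u,v,w) : u ≥ 0, v ≥ 0, w ≥ 0})`, and let `φ₁, φ₂ : G → ℤ` be the homomorphisms
induced by `(t,u,v,w) ↦ m·u + a·w` and `(t,u,v,w) ↦ m·v + b·w`.  Then for `x ∈ G` there is
`n ≥ 1` with `n • x ∈ Q` if and only if `φ₁ x ≥ 0` and `φ₂ x ≥ 0`.  (This computes the
saturation of `(ℤ ⊕ (1/a)ℕ ⊕ (1/b)ℕ) ⊕_ℕ (1/m)ℕ` inside its groupification.) -/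
theorem stmt7
    (a b m : ℕ) (ha : 0 < a) (hb : 0 < b) (hm : 0 < m)
    (hadvd : a ∣ m) (hbdvd : b ∣ m)
    (S : AddSubgroup (ℤ × ℤ × ℤ × ℤ))
    (hS : S = AddSubgroup.zmultiples
      (((1 : ℤ), (a : ℤ), (b : ℤ), -(m : ℤ)) : ℤ × ℤ × ℤ × ℤ))
    (Q : Set ((ℤ × ℤ × ℤ × ℤ) ⧸ S))
    (hQ : Q = (QuotientAddGroup.mk' S) ''
      {x : ℤ × ℤ × ℤ × ℤ | 0 ≤ x.2.1 ∧ 0 ≤ x.2.2.1 ∧ 0 ≤ x.2.2.2})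
    (φ₁ φ₂ : ((ℤ × ℤ × ℤ × ℤ) ⧸ S) →+ ℤ)
    (hφ₁ : ∀ t u v w : ℤ, φ₁ (QuotientAddGroup.mk' S (t, u, v, w)) = m * u + a * w)
    (hφ₂ : ∀ t u v w : ℤ, φ₂ (QuotientAddGroup.mk' S (t, u, v, w)) = m * v + b * w) :
    ∀ x : (ℤ × ℤ × ℤ × ℤ) ⧸ S,
      (∃ n : ℕ, 1 ≤ n ∧ n • x ∈ Q) ↔ (0 ≤ φ₁ x ∧ 0 ≤ φ₂ x) := by
  intro x
  constructor
  · rintro ⟨n, hn1, hnQ⟩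
    rw [hQ] at hnQ
    obtain ⟨⟨t, u, v, w⟩, ⟨hu, hv, hw⟩, hy⟩ := hnQ
    have h1 : φ₁ (n • x) = m * u + a * w := by rw [← hy, hφ₁]
    have h2 : φ₂ (n • x) = m * v + b * w := by rw [← hy, hφ₂]
    rw [map_nsmul] at h1 h2
    have hnpos : (0 : ℤ) < n := by exact_mod_cast hn1
    constructor
    · have : (0 : ℤ) ≤ (n : ℤ) * φ₁ x := by
        rw [← nsmul_eq_mul, h1]
        have : (0:ℤ) ≤ (m:ℤ) * u := mul_nonneg (by positivity) hu
        have : (0:ℤ) ≤ (a:ℤ) * w := mul_nonneg (by positivity) hw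
        linarith
      exact nonneg_of_mul_nonneg_right this hnpos
    · have : (0 : ℤ) ≤ (n : ℤ) * φ₂ x := by
        rw [← nsmul_eq_mul, h2]
        have : (0:ℤ) ≤ (m:ℤ) * v := mul_nonneg (by positivity) hv
        have : (0:ℤ) ≤ (b:ℤ) * w := mul_nonneg (by positivity) hw
        linarith
      exact nonneg_of_mul_nonneg_right this hnpos
  · rintro ⟨h1, h2⟩
    obtain ⟨⟨t, u, v, w⟩, rfl⟩ := QuotientAddGroup.mk'_surjective S x
    rw [hφ₁] at h1
    rw [hφ₂] at h2
    refine ⟨m, hm, ?_⟩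
    rw [hQ]
    refine ⟨(m * t + w, m * u + a * w, m * v + b * w, 0), ⟨h1, h2, le_refl 0⟩, ?_⟩
    rw [← map_nsmul]
    rw [QuotientAddGroup.mk'_eq_mk']
    refine ⟨(-w) • ((1 : ℤ), (a : ℤ), (b : ℤ), -(m : ℤ)), ?_, ?_⟩
    · rw [hS]; exact AddSubgroup.zsmul_mem _ (AddSubgroup.mem_zmultiples _) _
    · simp [Prod.ext_iff, Prod.smul_def, smul_eq_mul]
      and_intros <;> ring
end
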